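/- arXiv:1208.3991 — 4 statements merged into one kernel-verified Lean document; each statement's English description precedes it below -/
import Mathlib

section
/- Let X be a compact metric space with a uniquely ergodic homeomorphism T and invariant measure μ. Let (f_n) be a continuous subadditive cocycle over T with Lyapunov exponent Λ(f). Then for every ε > 0 there exist N ∈ ℕ and δ > 0 such that: for every continuous subadditive cocycle (g_n) over T satisfying sup_x |g_n(x) − f_n(x)| < δ for all n ≤ N, and every n ≥ N and every x ∈ X, one has (1/n) g_n(x) ≤ Λ(f) + ε. -/
/-!
Uniquely ergodic systems have uniformly convergent Birkhoff averages: otherwise a weak-* limit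
of empirical measures along bad orbit segments would be an invariant probability measure
against which the integral of the observable is off by `ε`.

Given `ε`, pick `m` with `∫ f_m / m < Λ(f) + ε / 4`. Cutting `[0, n)` into blocks of length `m`
starting at each phase `i < m` and averaging over the phases bounds `m g_n(x)` by the Birkhoff sum
of `g_m` along the orbit of `x`, up to boundary terms controlled by `g_1, …, g_{3m}`. Closeness of
`g_l` to `f_l` for `l ≤ 3m` then lets uniform convergence for `f_m` bound `g_n(x) / n`.
-/

open MeasureTheory Filter Topology Finset BoundedContinuousFunction
open scoped ENNReal

section OrbitMeasure

variable {X : Type*} [MeasurableSpace X]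

noncomputable def orbitMeasure (T : X → X) (n : ℕ) (x : X) : Measure X :=
  (n : ℝ≥0∞)⁻¹ • ∑ k ∈ range n, Measure.dirac (T^[k] x)

lemma isProbabilityMeasure_orbitMeasure (T : X → X) {n : ℕ} (hn : n ≠ 0) (x : X) :
    IsProbabilityMeasure (orbitMeasure T n x) := by
  constructor
  simp [orbitMeasure, ENNReal.inv_mul_cancel (Nat.cast_ne_zero.2 hn) (ENNReal.natCast_ne_top n)]

lemma integral_orbitMeasure (T : X → X) (n : ℕ) (x : X) {φ : X → ℝ}
    (hφ : StronglyMeasurable φ) :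
    ∫ y, φ y ∂orbitMeasure T n x = birkhoffAverage ℝ T φ n x := by
  rw [orbitMeasure, integral_smul_measure, integral_finsetSum_measure
    fun k _ => integrable_dirac' hφ enorm_lt_top]
  simp [birkhoffAverage, birkhoffSum, integral_dirac' _ _ hφ]

end OrbitMeasure

lemma birkhoffAverage_comp_self_apply {X : Type*} (T : X → X) (ψ : X → ℝ) (n : ℕ) (x : X) :
    birkhoffAverage ℝ T (ψ ∘ T) n x = birkhoffAverage ℝ T ψ n (T x) := by
  simp only [birkhoffAverage, birkhoffSum, Function.comp_apply,
    ← Function.iterate_succ_apply' T, Function.iterate_succ_apply]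

lemma map_eq_self_of_tendsto_birkhoffAverage {X ι : Type*} [TopologicalSpace X]
    [HasOuterApproxClosed X] [MeasurableSpace X] [BorelSpace X] {T : X → X} (hT : Continuous T)
    {l : Filter ι} [l.NeBot] {ns : ι → ℕ} (hns : Tendsto ns l atTop) {xs : ι → X}
    {ν : Measure X} [IsFiniteMeasure ν]
    (hν : ∀ ψ : X →ᵇ ℝ,
      Tendsto (fun i => birkhoffAverage ℝ T ψ (ns i) (xs i)) l (𝓝 (∫ x, ψ x ∂ν))) :
    ν.map T = ν := by
  refine ext_of_forall_integral_eq_of_IsFiniteMeasure fun ψ => ?_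
  rw [integral_map hT.aemeasurable ψ.continuous.aestronglyMeasurable]
  refine tendsto_nhds_unique ?_ (hν ψ)
  refine tendsto_of_tendsto_of_dist (hν (ψ.compContinuous ⟨T, hT⟩)) ?_
  have hbound : Tendsto (fun i => 2 * ‖ψ‖ / ns i) l (𝓝 0) :=
    tendsto_const_nhds.div_atTop (tendsto_natCast_atTop_atTop.comp hns)
  refine squeeze_zero (fun _ => dist_nonneg) (fun i => ?_) hbound
  change dist (birkhoffAverage ℝ T (ψ ∘ T) _ _) _ ≤ _
  rw [birkhoffAverage_comp_self_apply, dist_birkhoffAverage_apply_birkhoffAverage]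
  gcongr
  exact ψ.dist_le_two_norm _ _

theorem tendstoUniformly_birkhoffAverage_of_unique_invariant {X : Type*} [TopologicalSpace X]
    [CompactSpace X] [T2Space X] [HasOuterApproxClosed X] [MeasurableSpace X] [BorelSpace X]
    {T : X → X} (hT : Continuous T) {μ : Measure X}
    (huniq : ∀ ν : Measure X, IsProbabilityMeasure ν → MeasurePreserving T ν ν → ν = μ)
    {φ : X → ℝ} (hφ : Continuous φ) :
    TendstoUniformly (birkhoffAverage ℝ T φ) (fun _ => ∫ x, φ x ∂μ) atTop := by
  rw [Metric.tendstoUniformly_iff]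
  intro ε hε
  by_contra! hfar
  obtain ⟨ns, hns_mono, hns⟩ :=
    extraction_of_frequently_atTop (hfar.and_eventually (eventually_gt_atTop 0))
  choose xs hxs using fun k => (hns k).1
  let νs : ℕ → ProbabilityMeasure X := fun k =>
    ⟨orbitMeasure T (ns k) (xs k), isProbabilityMeasure_orbitMeasure T (hns k).2.ne' _⟩
  let U := Ultrafilter.of (atTop : Filter ℕ)
  obtain ⟨ν, -, hν⟩ := isCompact_univ.ultrafilter_le_nhds (U.map νs) (by simp)
  have hlim (ψ : X →ᵇ ℝ) :
      Tendsto (fun k => birkhoffAverage ℝ T ψ (ns k) (xs k)) U (𝓝 (∫ x, ψ x ∂ν)) := by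
    have := ProbabilityMeasure.tendsto_iff_forall_integral_tendsto.1 hν ψ
    simpa [νs, integral_orbitMeasure _ _ _ ψ.continuous.stronglyMeasurable] using this
  have hνμ : (ν : Measure X) = μ := huniq ν inferInstance
    ⟨hT.measurable, map_eq_self_of_tendsto_birkhoffAverage hT
      (hns_mono.tendsto_atTop.mono_left (Ultrafilter.of_le _)) hlim⟩
  have hφlim := hlim (mkOfCompact ⟨φ, hφ⟩)
  rw [hνμ] at hφlim
  obtain ⟨k, hk⟩ := (hφlim.eventually (Metric.ball_mem_nhds _ hε)).exists
  exact (hxs k).not_gt (by rw [dist_comm]; exact hk)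

def IsSubadditiveCocycle {X : Type*} (T : X → X) (g : ℕ → X → ℝ) : Prop :=
  ∀ n m, 1 ≤ n → 1 ≤ m → ∀ x, g (n + m) x ≤ g n x + g m (T^[n] x)

lemma sum_birkhoffSum_iterate {X M : Type*} [AddCommMonoid M] (T : X → X) (ψ : X → M)
    (m q : ℕ) (x : X) :
    ∑ i ∈ range m, birkhoffSum T^[m] ψ q (T^[i] x) = birkhoffSum T ψ (q * m) x := by
  induction q with
  | zero => simp [birkhoffSum_zero]
  | succ q ih =>
    simp only [birkhoffSum_succ, sum_add_distrib, ih, add_mul, one_mul, birkhoffSum_add]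
    congr 1
    refine sum_congr rfl fun i _ => ?_
    rw [← Function.iterate_mul, ← Function.iterate_add_apply, ← Function.iterate_add_apply,
      add_comm, mul_comm]

namespace IsSubadditiveCocycle

variable {X : Type*} {T : X → X} {g : ℕ → X → ℝ}

lemma le_birkhoffSum_add (hg : IsSubadditiveCocycle T g) {m s : ℕ} (hm : 1 ≤ m) (hs : 1 ≤ s)
    (q : ℕ) (x : X) :
    g (q * m + s) x ≤ birkhoffSum T^[m] (g m) q x + g s ((T^[m])^[q] x) := by
  induction q generalizing x with
  | zero => simp [birkhoffSum_zero]
  | succ q ih =>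
    calc g ((q + 1) * m + s) x = g (m + (q * m + s)) x := by ring_nf
      _ ≤ g m x + g (q * m + s) (T^[m] x) := hg _ _ hm (by omega) x
      _ ≤ g m x + (birkhoffSum T^[m] (g m) q (T^[m] x) + g s ((T^[m])^[q] (T^[m] x))) := by
        gcongr; exact ih _
      _ = birkhoffSum T^[m] (g m) (q + 1) x + g s ((T^[m])^[q + 1] x) := by
        rw [birkhoffSum_succ', Function.iterate_succ_apply, add_assoc]

lemma mul_le_birkhoffSum_add (hg : IsSubadditiveCocycle T g) {m n : ℕ} (hm : 1 ≤ m)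
    (hmn : 3 * m ≤ n) {C : ℝ} (hC : ∀ l, 1 ≤ l → l ≤ 3 * m → ∀ y, |g l y| ≤ C) (x : X) :
    m * g n x ≤ birkhoffSum T (g m) n x + 5 * m * C := by
  have hC0 : 0 ≤ C := (abs_nonneg _).trans (hC m hm (by omega) x)
  have hup (l : ℕ) (h1 : 1 ≤ l) (h3 : l ≤ 3 * m) (y : X) : g l y ≤ C := (abs_le.1 (hC l h1 h3 y)).2
  have hlow (y : X) : -C ≤ g m y := (abs_le.1 (hC m hm (by omega) y)).1
  -- a remainder `r ≥ 2 * m` leaves room to start the blocks at any phase `i < m`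
  obtain ⟨q, r, rfl, hr2, hr3⟩ : ∃ q r, n = q * m + r ∧ 2 * m ≤ r ∧ r < 3 * m := by
    refine ⟨n / m - 2, n % m + 2 * m, ?_, by omega,
      by have := Nat.mod_lt n (show 0 < m by omega); omega⟩
    have h2 : 2 * m ≤ n / m * m :=
      Nat.mul_le_mul_right m ((Nat.le_div_iff_mul_le (by omega)).2 (by omega))
    have := Nat.div_add_mod' n m
    rw [Nat.sub_mul]
    omega
  have hphase (i : ℕ) (hi : i < m) :
      g (q * m + r) x ≤ 2 * C + birkhoffSum T^[m] (g m) q (T^[i] x) := by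
    have hblock := hg.le_birkhoffSum_add hm (s := r - i) (by omega) q (T^[i] x)
    have htail := hup (r - i) (by omega) (by omega) ((T^[m])^[q] (T^[i] x))
    rcases Nat.eq_zero_or_pos i with rfl | hi0
    · simp only [Nat.sub_zero, Function.iterate_zero_apply] at hblock htail ⊢
      linarith
    · have hsplit := hg i (q * m + (r - i)) hi0 (by omega) x
      rw [show i + (q * m + (r - i)) = q * m + r by omega] at hsplit
      linarith [hup i hi0 (by omega) x]
  have hsum : m * g (q * m + r) x ≤ 2 * m * C + birkhoffSum T (g m) (q * m) x := by
    have := sum_le_sum fun i hi => hphase i (mem_range.1 hi)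
    rw [sum_const, card_range, nsmul_eq_mul, sum_add_distrib, sum_const, card_range,
      nsmul_eq_mul, sum_birkhoffSum_iterate] at this
    linarith
  have hrest : r * (-C) ≤ birkhoffSum T (g m) r (T^[q * m] x) := by
    simpa [birkhoffSum] using card_nsmul_le_sum (range r) _ (-C) fun k _ => hlow (T^[k] _)
  have hrC : r * C ≤ 3 * m * C := mul_le_mul_of_nonneg_right (by exact_mod_cast hr3.le) hC0
  rw [birkhoffSum_add]
  linarith

lemma mul_le_birkhoffSum_add_of_abs_sub_lt (hg : IsSubadditiveCocycle T g) {f : ℕ → X → ℝ}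
    {m n : ℕ} (hm : 1 ≤ m) (hmn : 3 * m ≤ n) {C δ : ℝ} (hδ : δ ≤ 1)
    (hf : ∀ l ≤ 3 * m, ∀ y, |f l y| ≤ C) (hgf : ∀ l ≤ 3 * m, ∀ y, |g l y - f l y| < δ) (x : X) :
    m * g n x ≤ birkhoffSum T (f m) n x + n * δ + 5 * m * (C + 1) := by
  have hgC (l : ℕ) (_ : 1 ≤ l) (hl : l ≤ 3 * m) (y : X) : |g l y| ≤ C + 1 := by
    linarith [abs_sub_abs_le_abs_sub (g l y) (f l y), hf l hl y, hgf l hl y]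
  have hsum : birkhoffSum T (g m) n x ≤ birkhoffSum T (f m) n x + n * δ := by
    have hpt (k : ℕ) : g m (T^[k] x) ≤ f m (T^[k] x) + δ := by
      linarith [(abs_lt.1 (hgf m (by omega) (T^[k] x))).2]
    simpa [birkhoffSum, sum_add_distrib] using sum_le_sum fun k (_ : k ∈ range n) => hpt k
  linarith [hg.mul_le_birkhoffSum_add hm hmn hgC x]

end IsSubadditiveCocycle

lemma exists_abs_le_of_continuous {X : Type*} [TopologicalSpace X] [CompactSpace X]
    (f : ℕ → X → ℝ) (hf : ∀ n, Continuous (f n)) (L : ℕ) :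
    ∃ C, ∀ l ≤ L, ∀ y, |f l y| ≤ C := by
  choose C hC using fun l => isCompact_univ.exists_bound_of_continuousOn (hf l).continuousOn
  obtain ⟨M, hM⟩ := ((Set.finite_Iic L).image C).bddAbove
  exact ⟨M, fun l hl y => (hC l y trivial).trans (hM ⟨l, hl, rfl⟩)⟩

theorem uniform_upper_semicontinuity_lyapunov_general
    {X : Type*} [MetricSpace X] [CompactSpace X] [MeasurableSpace X] [BorelSpace X]
    (T : X ≃ₜ X) (μ : Measure X)
    (huniq : ∀ ν : Measure X, IsProbabilityMeasure ν → MeasurePreserving T ν ν → ν = μ)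
    (f : ℕ → X → ℝ) (hcont : ∀ n, Continuous (f n)) :
    ∀ ε > (0 : ℝ), ∃ (N : ℕ) (δ : ℝ), 0 < δ ∧
      ∀ g : ℕ → X → ℝ, (∀ n, Continuous (g n)) →
        (∀ n m, 1 ≤ n → 1 ≤ m → ∀ x, g (n + m) x ≤ g n x + g m ((⇑T)^[n] x)) →
        (∀ n ≤ N, ∀ x : X, |g n x - f n x| < δ) →
        ∀ n ≥ N, ∀ x : X,
          g n x / n ≤ (⨅ k : ℕ+, (∫ x, f k x ∂μ) / k) + ε := by
  intro ε hε
  set Λ := ⨅ k : ℕ+, (∫ x, f k x ∂μ) / k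
  obtain ⟨m, hm⟩ : ∃ m : ℕ+, (∫ x, f m x ∂μ) / m < Λ + ε / 4 :=
    exists_lt_of_ciInf_lt (by linarith)
  have hm0 : (0 : ℝ) < m := by positivity
  have hunif := tendstoUniformly_birkhoffAverage_of_unique_invariant T.continuous huniq (hcont m)
  obtain ⟨N₁, hN₁⟩ :=
    (Metric.tendstoUniformly_iff.1 hunif (m * ε / 4) (by positivity)).exists_forall_of_atTop
  obtain ⟨C, hC⟩ := exists_abs_le_of_continuous f hcont (3 * m)
  obtain ⟨N₂, hN₂⟩ := exists_nat_ge (20 * (C + 1) / ε)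
  refine ⟨max (3 * m) (max N₁ (N₂ + 1)), min 1 (m * ε / 4), by positivity,
    fun g _ hg hclose n hn x => ?_⟩
  simp only [ge_iff_le, max_le_iff] at hn
  have hcocycle := IsSubadditiveCocycle.mul_le_birkhoffSum_add_of_abs_sub_lt hg m.pos hn.1
    (min_le_left _ _) hC (fun l hl => hclose l (by omega)) x
  have hn0 : (0 : ℝ) < n := by exact_mod_cast (show 0 < n by omega)
  have hfμ : birkhoffSum T (f m) n x ≤ n * ((∫ x, f m x ∂μ) + m * ε / 4) := by
    have h := hN₁ n hn.2.1 x
    rw [Real.dist_eq, abs_sub_lt_iff, birkhoffAverage, smul_eq_mul] at h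
    exact (inv_mul_le_iff₀ hn0).1 (by linarith)
  have hΛ : ∫ x, f m x ∂μ ≤ (Λ + ε / 4) * m := ((div_lt_iff₀ hm0).1 hm).le
  have hnε : 20 * (C + 1) ≤ n * ε :=
    (div_le_iff₀ hε).1 (hN₂.trans (by exact_mod_cast (show N₂ ≤ n by omega)))
  rw [div_le_iff₀ hn0]
  refine le_of_mul_le_mul_left ?_ hm0
  linarith [mul_le_mul_of_nonneg_left hΛ hn0.le, mul_le_mul_of_nonneg_left hnε hm0.le,
    mul_le_mul_of_nonneg_left (min_le_right 1 (m * ε / 4)) hn0.le]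

/-- Uniform (in the phase) upper semicontinuity of the Lyapunov exponent in the cocycle,
for continuous subadditive cocycles over a uniquely ergodic homeomorphism of a compact
metric space: for every `ε > 0` there are `N` and `δ > 0` such that any continuous
subadditive cocycle `(g_n)` with `sup_x |g_n(x) - f_n(x)| < δ` for all `n ≤ N` satisfies
`(1/n) g_n(x) ≤ Λ(f) + ε` for all `n ≥ N` and all `x`. -/
theorem uniform_upper_semicontinuity_lyapunov
    {X : Type*} [MetricSpace X] [CompactSpace X] [MeasurableSpace X] [BorelSpace X]
    (T : X ≃ₜ X) (μ : Measure X) [IsProbabilityMeasure μ]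
    (hinv : MeasurePreserving T μ μ)
    (huniq : ∀ ν : Measure X, IsProbabilityMeasure ν → MeasurePreserving T ν ν → ν = μ)
    (f : ℕ → X → ℝ) (hcont : ∀ n, Continuous (f n))
    (hsub : ∀ n m, 1 ≤ n → 1 ≤ m → ∀ x, f (n + m) x ≤ f n x + f m ((⇑T)^[n] x)) :
    ∀ ε > (0 : ℝ), ∃ (N : ℕ) (δ : ℝ), 0 < δ ∧
      ∀ g : ℕ → X → ℝ, (∀ n, Continuous (g n)) →
        (∀ n m, 1 ≤ n → 1 ≤ m → ∀ x, g (n + m) x ≤ g n x + g m ((⇑T)^[n] x)) →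
        (∀ n ≤ N, ∀ x : X, |g n x - f n x| < δ) →
        ∀ n ≥ N, ∀ x : X,
          g n x / n ≤ (⨅ k : ℕ+, (∫ x, f k x ∂μ) / k) + ε :=
  uniform_upper_semicontinuity_lyapunov_general T μ huniq f hcont
end

section
/- Let ω be irrational with continued fraction approximants p_n/q_n. For any interval I ⊂ ℝ/ℤ with |I| > 1/q_n and any θ ∈ ℝ/ℤ, there exists an integer j with 0 ≤ j ≤ q_n + q_{n−1} − 1 such that θ + jω mod 1 belongs to I. -/
open GenContFract

namespace OrbitHitsAux

variable (ω : ℝ)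

lemma not_term (hω : Irrational ω) (k : ℕ) : ¬(GenContFract.of ω).TerminatedAt k := by
  intro h
  have hterm : (GenContFract.of ω).Terminates := ⟨k, h⟩
  rw [GenContFract.terminates_iff_rat] at hterm
  obtain ⟨q, hq⟩ := hterm
  exact hω ⟨q, hq.symm⟩

lemma one_le_den (hω : Irrational ω) (k : ℕ) : 1 ≤ (GenContFract.of ω).dens k := by
  have h := GenContFract.succ_nth_fib_le_of_nth_den (v := ω) (n := k)
    (Or.inr (not_term ω hω _))
  have h1 : (1 : ℝ) ≤ (Nat.fib (k + 1) : ℝ) := by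
    exact_mod_cast Nat.succ_le_of_lt (Nat.fib_pos.mpr k.succ_pos)
  linarith

lemma den_pos (hω : Irrational ω) (k : ℕ) : 0 < (GenContFract.of ω).dens k :=
  lt_of_lt_of_le one_pos (one_le_den ω hω k)

lemma s_get (hω : Irrational ω) (k : ℕ) : ∃ gp, (GenContFract.of ω).s.get? k = some gp :=
  Option.ne_none_iff_exists'.1 (not_term ω hω k)

/-- denominators are naturals and numerators are integers -/
lemma exists_nat_int (hω : Irrational ω) (k : ℕ) :
    (∃ Q : ℕ, (Q : ℝ) = (GenContFract.of ω).dens k) ∧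
      (∃ P : ℤ, (P : ℝ) = (GenContFract.of ω).nums k) := by
  induction k using Nat.twoStepInduction with
  | zero =>
    refine ⟨⟨1, ?_⟩, ⟨⌊ω⌋, ?_⟩⟩
    · rw [GenContFract.zeroth_den_eq_one]; norm_num
    · rw [GenContFract.zeroth_num_eq_h, GenContFract.of_h_eq_floor]
  | one =>
    obtain ⟨gp, hgp⟩ := s_get ω hω 0
    have ha : gp.a = 1 := GenContFract.of_partNum_eq_one (GenContFract.partNum_eq_s_a hgp)
    obtain ⟨z, hz⟩ := GenContFract.exists_int_eq_of_partDen (GenContFract.partDen_eq_s_b hgp)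
    have hb1 : (1 : ℝ) ≤ gp.b :=
      GenContFract.of_one_le_get?_partDen (GenContFract.partDen_eq_s_b hgp)
    have hz1 : 1 ≤ z := by exact_mod_cast hz ▸ hb1
    refine ⟨⟨z.toNat, ?_⟩, ⟨z * ⌊ω⌋ + 1, ?_⟩⟩
    · rw [GenContFract.first_den_eq hgp, hz]
      have hzz : (z.toNat : ℤ) = z := Int.toNat_of_nonneg (by omega)
      exact_mod_cast congrArg (fun x : ℤ => (x : ℝ)) hzz
    · rw [GenContFract.first_num_eq hgp, ha, GenContFract.of_h_eq_floor, hz]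
      push_cast; ring
  | more k ih1 ih2 =>
    obtain ⟨⟨Q0, hQ0⟩, ⟨P0, hP0⟩⟩ := ih1
    obtain ⟨⟨Q1, hQ1⟩, ⟨P1, hP1⟩⟩ := ih2
    obtain ⟨gp, hgp⟩ := s_get ω hω (k + 1)
    have ha : gp.a = 1 := GenContFract.of_partNum_eq_one (GenContFract.partNum_eq_s_a hgp)
    obtain ⟨z, hz⟩ := GenContFract.exists_int_eq_of_partDen (GenContFract.partDen_eq_s_b hgp)
    have hb1 : (1 : ℝ) ≤ gp.b :=
      GenContFract.of_one_le_get?_partDen (GenContFract.partDen_eq_s_b hgp)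
    have hz1 : 1 ≤ z := by exact_mod_cast hz ▸ hb1
    have hden := GenContFract.dens_recurrence hgp rfl rfl
    have hnum := GenContFract.nums_recurrence hgp rfl rfl
    refine ⟨⟨z.toNat * Q1 + Q0, ?_⟩, ⟨z * P1 + P0, ?_⟩⟩
    · rw [hden, ha, hz, ← hQ0, ← hQ1]
      have hzz : (z.toNat : ℤ) = z := Int.toNat_of_nonneg (by omega)
      have hzr : ((z.toNat : ℕ) : ℝ) = (z : ℝ) := by exact_mod_cast hzz
      push_cast [hzr]
      ring
    · rw [hnum, ha, hz, ← hP0, ← hP1]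
      push_cast; ring

lemma den_lt (hω : Irrational ω) (k : ℕ) :
    (GenContFract.of ω).dens k + 1 ≤ (GenContFract.of ω).dens (k + 2) := by
  obtain ⟨gp, hgp⟩ := s_get ω hω (k + 1)
  have ha : gp.a = 1 := GenContFract.of_partNum_eq_one (GenContFract.partNum_eq_s_a hgp)
  have hb1 : (1 : ℝ) ≤ gp.b :=
    GenContFract.of_one_le_get?_partDen (GenContFract.partDen_eq_s_b hgp)
  have hden := GenContFract.dens_recurrence hgp rfl rfl
  have h1 := one_le_den ω hω (k + 1)
  rw [hden, ha]
  nlinarith [one_le_den ω hω k]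

lemma det (hω : Irrational ω) (k : ℕ) :
    (GenContFract.of ω).nums k * (GenContFract.of ω).dens (k + 1) -
      (GenContFract.of ω).dens k * (GenContFract.of ω).nums (k + 1) = (-1) ^ (k + 1) :=
  SimpContFract.determinant (s := SimpContFract.of ω) (not_term ω hω k)

lemma abs_beta_le (hω : Irrational ω) (k : ℕ) :
    |(GenContFract.of ω).dens k * ω - (GenContFract.of ω).nums k| ≤
      1 / (GenContFract.of ω).dens (k + 1) := by
  have h := GenContFract.abs_sub_convs_le (v := ω) (n := k) (not_term ω hω k)
  have hd : 0 < (GenContFract.of ω).dens k := den_pos ω hω k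
  have hd1 : 0 < (GenContFract.of ω).dens (k + 1) := den_pos ω hω (k + 1)
  have heq : (GenContFract.of ω).dens k * ω - (GenContFract.of ω).nums k =
      (GenContFract.of ω).dens k * (ω - (GenContFract.of ω).convs k) := by
    rw [GenContFract.conv_eq_num_div_den]; field_simp
  rw [heq, abs_mul, abs_of_pos hd]
  calc (GenContFract.of ω).dens k * |ω - (GenContFract.of ω).convs k|
      ≤ (GenContFract.of ω).dens k *
        (1 / ((GenContFract.of ω).dens k * (GenContFract.of ω).dens (k + 1))) := by
        exact mul_le_mul_of_nonneg_left h hd.le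
    _ = 1 / (GenContFract.of ω).dens (k + 1) := by field_simp

lemma beta_id (hω : Irrational ω) (k : ℕ) :
    (GenContFract.of ω).dens (k + 1) * ((GenContFract.of ω).dens k * ω -
        (GenContFract.of ω).nums k) -
      (GenContFract.of ω).dens k * ((GenContFract.of ω).dens (k + 1) * ω -
        (GenContFract.of ω).nums (k + 1)) = (-1) ^ k := by
  have hdet := det ω hω k
  have hsq : (-1 : ℝ) ^ k * (-1) ^ k = 1 := by
    rw [← pow_add]; exact Even.neg_one_pow ⟨k, rfl⟩
  linear_combination -hdet

lemma sigma_pos (hω : Irrational ω) (k : ℕ) :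
    0 < (-1 : ℝ) ^ k * ((GenContFract.of ω).dens k * ω - (GenContFract.of ω).nums k) := by
  have hid := beta_id ω hω k
  have habs := abs_beta_le ω hω (k + 1)
  have hlt := den_lt ω hω k
  have hd0 := den_pos ω hω k
  have hd1 := den_pos ω hω (k + 1)
  have hd2 := den_pos ω hω (k + 2)
  set B := (GenContFract.of ω).dens k * ω - (GenContFract.of ω).nums k with hB
  set C := (GenContFract.of ω).dens (k + 1) * ω - (GenContFract.of ω).nums (k + 1) with hC
  have hsq : (-1 : ℝ) ^ k * (-1) ^ k = 1 := by
    rw [← pow_add]; exact Even.neg_one_pow ⟨k, rfl⟩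
  -- dens (k+1) * ((-1)^k * B) = 1 + (-1)^k * (dens k * C)
  have key : (GenContFract.of ω).dens (k + 1) * ((-1 : ℝ) ^ k * B) =
      1 + (-1 : ℝ) ^ k * ((GenContFract.of ω).dens k * C) := by
    linear_combination ((-1 : ℝ) ^ k) * hid + hsq
  have hCsmall : (GenContFract.of ω).dens k * |C| < 1 := by
    have h1 : (GenContFract.of ω).dens k * |C| ≤
        (GenContFract.of ω).dens k * (1 / (GenContFract.of ω).dens (k + 2)) :=
      mul_le_mul_of_nonneg_left habs hd0.le
    have h2 : (GenContFract.of ω).dens k * (1 / (GenContFract.of ω).dens (k + 2)) < 1 := by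
      rw [mul_one_div, div_lt_one hd2]; linarith
    linarith
  have habs2 : |(-1 : ℝ) ^ k * ((GenContFract.of ω).dens k * C)| < 1 := by
    rw [abs_mul, abs_mul, abs_pow, abs_neg, abs_one, one_pow, one_mul,
      abs_of_pos hd0]
    exact hCsmall
  have hpos : 0 < (GenContFract.of ω).dens (k + 1) * ((-1 : ℝ) ^ k * B) := by
    rw [key]
    have := (abs_lt.1 habs2).1
    linarith
  by_contra hcon
  push_neg at hcon
  nlinarith

lemma sigma_id (hω : Irrational ω) (k : ℕ) :
    (GenContFract.of ω).dens (k + 1) *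
        ((-1 : ℝ) ^ k * ((GenContFract.of ω).dens k * ω - (GenContFract.of ω).nums k)) +
      (GenContFract.of ω).dens k *
        ((-1 : ℝ) ^ (k + 1) *
          ((GenContFract.of ω).dens (k + 1) * ω - (GenContFract.of ω).nums (k + 1))) = 1 := by
  have hid := beta_id ω hω k
  have hsq : (-1 : ℝ) ^ k * (-1) ^ k = 1 := by
    rw [← pow_add]; exact Even.neg_one_pow ⟨k, rfl⟩
  linear_combination ((-1 : ℝ) ^ k) * hid + hsq

/-- The walk lemma: if `A·u ≡ s (mod 1)` and `B·u ≡ -t (mod 1)` with `s, t > 0`, then for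
any `y` some `k < A + B` satisfies `y - k·u ∈ [m, m + max s t]` for an integer `m`. -/
lemma walk (u : ℝ) (A B : ℕ) (hA : 0 < A) (hB : 0 < B) (s t : ℝ) (hs : 0 < s) (ht : 0 < t)
    (h1 : ∃ m : ℤ, (A : ℝ) * u = m + s) (h2 : ∃ m : ℤ, (B : ℝ) * u = m - t) (y : ℝ) :
    ∃ k : ℕ, k < A + B ∧ ∃ m : ℤ, 0 ≤ y - k * u - m ∧ y - k * u - m ≤ max s t := by
  obtain ⟨m1, hm1⟩ := h1
  obtain ⟨m2, hm2⟩ := h2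
  obtain ⟨k₀, hk₀mem, hk₀min⟩ := (Finset.range (A + B)).exists_min_image
    (fun k => Int.fract (y - k * u)) ⟨0, Finset.mem_range.2 (by omega)⟩
  set d := Int.fract (y - k₀ * u) with hd
  by_cases hdle : d ≤ max s t
  · refine ⟨k₀, Finset.mem_range.1 hk₀mem, ⌊y - k₀ * u⌋, ?_, ?_⟩
    · have := Int.fract_nonneg (y - k₀ * u)
      rw [Int.self_sub_floor]; exact this
    · rw [Int.self_sub_floor]; exact hdle
  · exfalso
    push_neg at hdle
    have hds : s < d := lt_of_le_of_lt (le_max_left _ _) hdle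
    have hdt : t < d := lt_of_le_of_lt (le_max_right _ _) hdle
    have hd1 : d < 1 := Int.fract_lt_one _
    by_cases hk : k₀ < B
    · have hk1 : k₀ + A ∈ Finset.range (A + B) := Finset.mem_range.2 (by omega)
      have hdval : d = y - k₀ * u - ⌊y - k₀ * u⌋ := by rw [hd, Int.self_sub_floor]
      have hcalc : y - (↑(k₀ + A) : ℝ) * u = (d - s) + ((⌊y - k₀ * u⌋ - m1 : ℤ) : ℝ) := by
        push_cast
        linarith [hm1, hdval]
      have hfr : Int.fract (y - (↑(k₀ + A) : ℝ) * u) = d - s := by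
        rw [hcalc, Int.fract_add_intCast]
        exact Int.fract_eq_self.2 ⟨by linarith, by linarith⟩
      have := hk₀min _ hk1
      simp only [hfr] at this
      linarith
    · push_neg at hk
      have hk1 : k₀ - B ∈ Finset.range (A + B) := Finset.mem_range.2 (by
        have := Finset.mem_range.1 hk₀mem; omega)
      have hcast : ((k₀ - B : ℕ) : ℝ) = (k₀ : ℝ) - B := by
        push_cast [Nat.cast_sub hk]; ring
      have hdval : d = y - k₀ * u - ⌊y - k₀ * u⌋ := by rw [hd, Int.self_sub_floor]
      have hcalc : y - (↑(k₀ - B) : ℝ) * u = (d - t) + ((⌊y - k₀ * u⌋ + m2 : ℤ) : ℝ) := by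
        rw [hcast]
        push_cast
        linarith [hm2, hdval]
      have hfr : Int.fract (y - (↑(k₀ - B) : ℝ) * u) = d - t := by
        rw [hcalc, Int.fract_add_intCast]
        exact Int.fract_eq_self.2 ⟨by linarith, by linarith⟩
      have := hk₀min _ hk1
      simp only [hfr] at this
      linarith

end OrbitHitsAux

open OrbitHitsAux in
/-- Let `ω` be irrational with continued fraction denominators `q_n`. Any interval on the
circle `ℝ/ℤ` of length `> 1/q_n` (represented as `[a, a + ℓ) mod 1`) is hit by the orbit
`θ + jω mod 1` for some `0 ≤ j ≤ q_n + q_{n-1} - 1`. -/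
theorem orbit_hits_interval (ω : ℝ) (hω : Irrational ω) (n : ℕ) (a ℓ θ : ℝ)
    (hℓ : 1 / (GenContFract.of ω).dens n < ℓ) :
    ∃ j : ℕ, (j : ℝ) ≤ (GenContFract.of ω).dens n + (GenContFract.of ω).dens (n - 1) - 1 ∧
      ∃ m : ℤ, θ + j * ω - m ∈ Set.Ico a (a + ℓ) := by
  cases n with
  | zero =>
    rw [GenContFract.zeroth_den_eq_one] at hℓ ⊢
    have hℓ1 : 1 < ℓ := by rw [one_div_one] at hℓ; exact hℓ
    refine ⟨0, by norm_num [GenContFract.zeroth_den_eq_one], ⌊θ - a⌋, ?_, ?_⟩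
    · have := Int.floor_le (θ - a)
      push_cast; linarith
    · have := Int.lt_floor_add_one (θ - a)
      push_cast; linarith
  | succ N =>
    obtain ⟨⟨Q0, hQ0⟩, ⟨P0, hP0⟩⟩ := exists_nat_int ω hω N
    obtain ⟨⟨Q1, hQ1⟩, ⟨P1, hP1⟩⟩ := exists_nat_int ω hω (N + 1)
    have hσ0 := sigma_pos ω hω N
    have hσ1 := sigma_pos ω hω (N + 1)
    have hσ2 := sigma_pos ω hω (N + 2)
    have hid0 := sigma_id ω hω N
    have hid1 := sigma_id ω hω (N + 1)
    have hd0 := den_pos ω hω N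
    have hd1 := den_pos ω hω (N + 1)
    have hd2 := den_pos ω hω (N + 2)
    have hone0 := one_le_den ω hω N
    have hmono : (GenContFract.of ω).dens (N + 1) ≤ (GenContFract.of ω).dens (N + 2) :=
      GenContFract.of_den_mono (v := ω) (n := N + 1)
    set s0 : ℝ := (-1 : ℝ) ^ N * ((GenContFract.of ω).dens N * ω - (GenContFract.of ω).nums N)
      with hs0def
    set s1 : ℝ := (-1 : ℝ) ^ (N + 1) *
      ((GenContFract.of ω).dens (N + 1) * ω - (GenContFract.of ω).nums (N + 1)) with hs1def
    have hid1' : (GenContFract.of ω).dens (N + 2) * s1 +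
        (GenContFract.of ω).dens (N + 1) *
          ((-1 : ℝ) ^ (N + 2) *
            ((GenContFract.of ω).dens (N + 2) * ω - (GenContFract.of ω).nums (N + 2))) = 1 :=
      hid1
    -- max s0 s1 ≤ 1 / dens (N+1)
    have hb0 : s0 ≤ 1 / (GenContFract.of ω).dens (N + 1) := by
      rw [le_div_iff₀ hd1]
      nlinarith [mul_pos hd0 hσ1]
    have hb1 : s1 ≤ 1 / (GenContFract.of ω).dens (N + 1) := by
      have h1 : s1 ≤ 1 / (GenContFract.of ω).dens (N + 2) := by
        rw [le_div_iff₀ hd2]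
        nlinarith [mul_pos hd1 hσ2]
      have h2 : 1 / (GenContFract.of ω).dens (N + 2) ≤ 1 / (GenContFract.of ω).dens (N + 1) :=
        one_div_le_one_div_of_le hd1 hmono
      linarith
    have hM : max s0 s1 ≤ 1 / (GenContFract.of ω).dens (N + 1) := max_le hb0 hb1
    have hMpos : 0 < max s0 s1 := lt_of_lt_of_le hσ0 (le_max_left _ _)
    have hMℓ : max s0 s1 < ℓ := lt_of_le_of_lt hM hℓ
    -- uniform data for the walk
    obtain ⟨A, B, s, t, hA, hB, hs, ht, h1, h2, hAB, hmax⟩ :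
        ∃ (A B : ℕ) (s t : ℝ), 0 < A ∧ 0 < B ∧ 0 < s ∧ 0 < t ∧
          (∃ m : ℤ, (A : ℝ) * ω = m + s) ∧ (∃ m : ℤ, (B : ℝ) * ω = m - t) ∧
          (A : ℝ) + (B : ℝ) = (GenContFract.of ω).dens (N + 1) + (GenContFract.of ω).dens N ∧
          max s t = max s0 s1 := by
      rcases Nat.even_or_odd N with hev | hod
      · refine ⟨Q0, Q1, s0, s1, ?_, ?_, hσ0, hσ1, ⟨P0, ?_⟩, ⟨P1, ?_⟩, by rw [hQ0, hQ1]; try ring, rfl⟩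
        · have : (0:ℝ) < Q0 := hQ0 ▸ hd0; exact_mod_cast this
        · have : (0:ℝ) < Q1 := hQ1 ▸ hd1; exact_mod_cast this
        · rw [hQ0, hP0, hs0def, (hev.neg_one_pow : ((-1:ℝ)) ^ N = 1)]; ring
        · rw [hQ1, hP1, hs1def, ((Even.add_one hev).neg_one_pow : ((-1:ℝ)) ^ (N+1) = -1)]; ring
      · refine ⟨Q1, Q0, s1, s0, ?_, ?_, hσ1, hσ0, ⟨P1, ?_⟩, ⟨P0, ?_⟩, by rw [hQ0, hQ1]; try ring,
          max_comm _ _⟩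
        · have : (0:ℝ) < Q1 := hQ1 ▸ hd1; exact_mod_cast this
        · have : (0:ℝ) < Q0 := hQ0 ▸ hd0; exact_mod_cast this
        · rw [hQ1, hP1, hs1def, ((Odd.add_one hod).neg_one_pow : ((-1:ℝ)) ^ (N+1) = 1)]; ring
        · rw [hQ0, hP0, hs0def, (hod.neg_one_pow : ((-1:ℝ)) ^ N = -1)]; ring
    obtain ⟨k, hk, m, hm0, hm1⟩ := walk ω A B hA hB s t hs ht h1 h2 (a + max s t - θ)
    rw [hmax] at hm0 hm1
    refine ⟨k, ?_, -m, ?_, ?_⟩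
    · have hcast : (k : ℝ) + 1 ≤ (A : ℝ) + (B : ℝ) := by exact_mod_cast hk
      simp only [Nat.add_sub_cancel]
      linarith [hAB]
    · push_cast; linarith
    · push_cast; linarith
end

section
/- Let p be a real trigonometric polynomial of degree at most d on ℝ/ℤ, and let t ∈ ℝ. If the set U = {θ ∈ ℝ/ℤ : p(θ) > t} has Lebesgue measure at least 1/2, then U contains an interval of length at least c/d for some absolute constant c > 0. -/
open MeasureTheory Complex


-- injectivity of exp(2πiθ) on [0,1)
lemma aux_exp_injOn : Set.InjOn (fun θ : ℝ => Complex.exp (2 * Real.pi * Complex.I * θ)) (Set.Ico (0:ℝ) 1) := by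
  intro x hx y hy hxy
  simp only at hxy
  rw [Complex.exp_eq_exp_iff_exists_int] at hxy
  obtain ⟨n, hn⟩ := hxy
  have h2 : (2 * (Real.pi:ℂ) * Complex.I) ≠ 0 := by
    simp [Real.pi_ne_zero, Complex.I_ne_zero]
  have hx' : (x:ℂ) = (y:ℂ) + n := by
    have : 2 * (Real.pi:ℂ) * Complex.I * x = 2 * (Real.pi:ℂ) * Complex.I * ((y:ℂ) + n) := by
      rw [hn]; ring
    exact mul_left_cancel₀ h2 this
  have hre : x = y + (n:ℝ) := by exact_mod_cast hx'
  have h1 : (n:ℝ) < 1 := by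
    rcases hx with ⟨hx0, hx1⟩; rcases hy with ⟨hy0, hy1⟩; linarith
  have h2' : (-1:ℝ) < (n:ℝ) := by
    rcases hx with ⟨hx0, hx1⟩; rcases hy with ⟨hy0, hy1⟩; linarith
  have hn1 : n < 1 := by exact_mod_cast h1
  have hn2 : -1 < n := by exact_mod_cast h2'
  have : n = 0 := by omega
  rw [this] at hre; simpa using hre


noncomputable def auxP (d : ℕ) (coeff : ℤ → ℂ) (t : ℝ) : Polynomial ℂ :=
  (∑ j ∈ Finset.Icc (-(d : ℤ)) d, Polynomial.C (coeff j) * Polynomial.X ^ (j + d).toNat)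
    - Polynomial.C (t : ℂ) * Polynomial.X ^ d

lemma auxP_natDegree_le (d : ℕ) (coeff : ℤ → ℂ) (t : ℝ) : (auxP d coeff t).natDegree ≤ 2 * d := by
  refine le_trans (Polynomial.natDegree_sub_le _ _) (max_le ?_ ?_)
  · refine Polynomial.natDegree_sum_le_of_forall_le _ _ fun j hj => ?_
    refine le_trans (Polynomial.natDegree_C_mul_le _ _) ?_
    rw [Polynomial.natDegree_X_pow]
    simp only [Finset.mem_Icc] at hj
    omega
  · refine le_trans (Polynomial.natDegree_C_mul_le _ _) ?_
    rw [Polynomial.natDegree_X_pow]; omega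

lemma auxP_eval (d : ℕ) (coeff : ℤ → ℂ) (p : ℝ → ℝ) (t : ℝ)
    (hp : ∀ θ : ℝ, (p θ : ℂ) = ∑ j ∈ Finset.Icc (-(d : ℤ)) d,
        coeff j * Complex.exp (2 * Real.pi * Complex.I * j * θ)) (θ : ℝ) :
    (auxP d coeff t).eval (Complex.exp (2 * Real.pi * Complex.I * θ)) =
      Complex.exp (2 * Real.pi * Complex.I * θ) ^ d * ((p θ : ℂ) - t) := by
  unfold auxP
  rw [Polynomial.eval_sub, Polynomial.eval_finset_sum]
  have hterm : ∀ j ∈ Finset.Icc (-(d : ℤ)) d,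
      Polynomial.eval (Complex.exp (2 * Real.pi * Complex.I * θ))
        (Polynomial.C (coeff j) * Polynomial.X ^ (j + d).toNat)
      = Complex.exp (2 * Real.pi * Complex.I * θ) ^ d *
          (coeff j * Complex.exp (2 * Real.pi * Complex.I * j * θ)) := by
    intro j hj
    simp only [Finset.mem_Icc] at hj
    have h0 : (0:ℤ) ≤ j + d := by omega
    simp only [Polynomial.eval_mul, Polynomial.eval_C, Polynomial.eval_pow, Polynomial.eval_X]
    rw [← Complex.exp_nat_mul, ← Complex.exp_nat_mul]
    have hcast : (((j + (d:ℤ)).toNat : ℕ) : ℂ) = (j : ℂ) + (d : ℂ) := by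
      have h1 : (((j + (d:ℤ)).toNat : ℕ) : ℤ) = j + d := Int.toNat_of_nonneg h0
      have h2 : ((((j + (d:ℤ)).toNat : ℕ) : ℤ) : ℂ) = ((j + (d:ℤ) : ℤ) : ℂ) := by
        exact_mod_cast congrArg (fun n : ℤ => (n : ℂ)) h1
      push_cast at h2
      exact h2
    rw [hcast, add_mul, Complex.exp_add]
    have harg : (j:ℂ) * (2 * Real.pi * Complex.I * θ) = 2 * Real.pi * Complex.I * j * θ := by ring
    rw [harg]
    ring
  rw [Finset.sum_congr rfl hterm, ← Finset.mul_sum, ← hp θ]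
  simp only [Polynomial.eval_mul, Polynomial.eval_C, Polynomial.eval_pow, Polynomial.eval_X]
  rw [← Complex.exp_nat_mul]
  ring_nf

/-- If a real trigonometric polynomial `p` of degree at most `d` has super-level set
`U = {θ : p(θ) > t}` of measure at least `1/2` on the circle (one period), then `U`
contains an interval of length at least `c/d`, for an absolute constant `c > 0`. -/
theorem superlevel_set_contains_interval :
    ∃ c > (0 : ℝ), ∀ (d : ℕ) (coeff : ℤ → ℂ) (p : ℝ → ℝ) (t : ℝ),
      (∀ θ : ℝ, (p θ : ℂ) = ∑ j ∈ Finset.Icc (-(d : ℤ)) d,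
          coeff j * Complex.exp (2 * Real.pi * Complex.I * j * θ)) →
      1 / 2 ≤ volume {θ ∈ Set.Ico (0 : ℝ) 1 | t < p θ} →
      ∃ a : ℝ, Set.Ioo a (a + c / d) ⊆ {θ : ℝ | t < p θ} := by
  classical
  refine ⟨1/10, by norm_num, ?_⟩
  intro d coeff p t hp hmeas
  rcases Nat.eq_zero_or_pos d with hd0 | hdpos
  · exact ⟨0, by simp [hd0]⟩
  -- continuity
  have hpe : p = fun (θ:ℝ) => (∑ j ∈ Finset.Icc (-(d : ℤ)) d,
      coeff j * Complex.exp (2 * Real.pi * Complex.I * j * (θ:ℂ))).re := by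
    funext θ; rw [← hp θ, Complex.ofReal_re]
  have hcont : Continuous p := by
    rw [hpe]
    refine Complex.continuous_re.comp ?_
    refine continuous_finset_sum _ fun j _ => ?_
    exact continuous_const.mul (Complex.continuous_exp.comp (by fun_prop))
  -- zero set
  set e : ℝ → ℂ := fun θ => Complex.exp (2 * Real.pi * Complex.I * θ) with he
  set S : Set ℝ := {θ ∈ Set.Ico (0:ℝ) 1 | p θ = t} with hSdef
  have hPne : auxP d coeff t ≠ 0 := by
    intro h
    have hallt : ∀ θ : ℝ, p θ = t := by
      intro θ
      have h1 := auxP_eval d coeff p t hp θ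
      rw [h, Polynomial.eval_zero] at h1
      have hz : Complex.exp (2 * Real.pi * Complex.I * θ) ^ d ≠ 0 :=
        pow_ne_zero _ (Complex.exp_ne_zero _)
      have h2 : ((p θ : ℂ) - t) = 0 := by
        rcases mul_eq_zero.mp h1.symm with h' | h'
        · exact absurd h' hz
        · exact h'
      have h3 : (p θ : ℂ) = (t : ℂ) := by linear_combination h2
      exact_mod_cast h3
    have hempty : {θ ∈ Set.Ico (0 : ℝ) 1 | t < p θ} = ∅ := by
      ext θ; simp [hallt θ]
    rw [hempty, measure_empty] at hmeas
    simp at hmeas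
  have himg : e '' S ⊆ ((auxP d coeff t).roots.toFinset : Set ℂ) := by
    rintro z ⟨θ, hθ, rfl⟩
    rw [Finset.mem_coe, Multiset.mem_toFinset, Polynomial.mem_roots hPne]
    have h1 := auxP_eval d coeff p t hp θ
    rw [hθ.2] at h1
    simpa [Polynomial.IsRoot, he] using h1
  have hSfin : S.Finite := by
    refine Set.Finite.of_finite_image (Set.Finite.subset (Finset.finite_toSet _) himg) ?_
    exact aux_exp_injOn.mono (fun θ h => h.1)
  have hScard : hSfin.toFinset.card ≤ 2 * d := by
    have h1 : hSfin.toFinset.card ≤ ((auxP d coeff t).roots.toFinset).card := by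
      refine Finset.card_le_card_of_injOn e ?_ ?_
      · intro a ha
        exact himg ⟨a, hSfin.mem_toFinset.mp ha, rfl⟩
      · intro a ha b hb hab
        exact aux_exp_injOn (hSfin.mem_toFinset.mp ha).1 (hSfin.mem_toFinset.mp hb).1 hab
    calc hSfin.toFinset.card ≤ _ := h1
      _ ≤ (auxP d coeff t).roots.card := Multiset.toFinset_card_le _
      _ ≤ (auxP d coeff t).natDegree := Polynomial.card_roots' _
      _ ≤ 2 * d := auxP_natDegree_le d coeff t
  -- the finite set of breakpoints
  set T : Finset ℝ := hSfin.toFinset ∪ {0, 1} with hTdef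
  have hTcard : T.card ≤ 2 * d + 2 := by
    calc T.card ≤ hSfin.toFinset.card + ({0,1} : Finset ℝ).card := Finset.card_union_le _ _
      _ ≤ 2 * d + 2 := by
          have : ({0,1} : Finset ℝ).card ≤ 2 := Finset.card_insert_le _ _ |>.trans (by simp)
          omega
  have h0T : (0:ℝ) ∈ T := by simp [hTdef]
  have h1T : (1:ℝ) ∈ T := by simp [hTdef]
  have hTsub : ∀ x ∈ T, x ∈ Set.Icc (0:ℝ) 1 := by
    intro x hx
    rw [hTdef, Finset.mem_union] at hx
    rcases hx with hx | hx
    · have := (hSfin.mem_toFinset.mp hx).1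
      exact ⟨this.1, this.2.le⟩
    · simp only [Finset.mem_insert, Finset.mem_singleton] at hx
      rcases hx with rfl | rfl <;> norm_num
  have hST : ∀ z ∈ S, z ∈ T := fun z hz => by
    rw [hTdef, Finset.mem_union]; left; exact hSfin.mem_toFinset.mpr hz
  -- breakpoint successor function
  by_contra hno
  push_neg at hno
  set nxt : ℝ → ℝ := fun s =>
    if h : (T.filter (fun y => s < y)).Nonempty then (T.filter (fun y => s < y)).min' h
    else s + 1 with hnxtdef
  have hnxt_mem : ∀ s ∈ T, s < 1 → nxt s ∈ T ∧ s < nxt s := by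
    intro s hs hs1
    have hne : (T.filter (fun y => s < y)).Nonempty := ⟨1, Finset.mem_filter.mpr ⟨h1T, hs1⟩⟩
    have h1 := Finset.min'_mem _ hne
    rw [Finset.mem_filter] at h1
    simp only [hnxtdef, dif_pos hne]
    exact ⟨h1.1, h1.2⟩
  have hnxt_le : ∀ s, ∀ y ∈ T, s < y → nxt s ≤ y := by
    intro s y hy hsy
    have hne : (T.filter (fun y => s < y)).Nonempty := ⟨y, Finset.mem_filter.mpr ⟨hy, hsy⟩⟩
    simp only [hnxtdef, dif_pos hne]
    exact Finset.min'_le _ _ (Finset.mem_filter.mpr ⟨hy, hsy⟩)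
  -- covering of [0,1] minus T by the gaps
  have hcover : ∀ x ∈ Set.Icc (0:ℝ) 1, x ∉ T → ∃ s ∈ T, s < 1 ∧ x ∈ Set.Ioo s (nxt s) := by
    intro x hx hxT
    have hx0 : 0 < x := lt_of_le_of_ne hx.1 (fun h => hxT (by rw [← h]; exact h0T))
    have hx1 : x < 1 := lt_of_le_of_ne hx.2 (fun h => hxT (by rw [h]; exact h1T))
    have hBne : (T.filter (fun y => y < x)).Nonempty := ⟨0, Finset.mem_filter.mpr ⟨h0T, hx0⟩⟩
    set s := (T.filter (fun y => y < x)).max' hBne with hsdef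
    have hsmem := Finset.max'_mem _ hBne
    rw [Finset.mem_filter] at hsmem
    obtain ⟨hsT, hsx⟩ := hsmem
    refine ⟨s, hsT, lt_trans hsx hx1, hsx, ?_⟩
    by_contra hge
    push_neg at hge
    have hmem := (hnxt_mem s hsT (lt_trans hsx hx1)).1
    have hlt := (hnxt_mem s hsT (lt_trans hsx hx1)).2
    have hnx : nxt s < x := lt_of_le_of_ne hge (fun h => hxT (by rw [← h]; exact hmem))
    have hle' := Finset.le_max' (T.filter (fun y => y < x)) (nxt s)
      (Finset.mem_filter.mpr ⟨hmem, hnx⟩)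
    have hle2 : nxt s ≤ s := by rw [hsdef]; exact hle'
    linarith
  -- sign constancy on gaps
  have hsign : ∀ s ∈ T, s < 1 → ∀ x ∈ Set.Ioo s (nxt s), t < p x →
      Set.Ioo s (nxt s) ⊆ {θ : ℝ | t < p θ} := by
    intro s hsT hs1 x hx hpx y hy
    by_contra hpy
    simp only [Set.mem_setOf_eq, not_lt] at hpy
    have hIoosub : Set.uIcc x y ⊆ Set.Ioo s (nxt s) := Set.ordConnected_Ioo.uIcc_subset hx hy
    have ht : t ∈ Set.uIcc (p x) (p y) := Set.mem_uIcc.mpr (Or.inr ⟨hpy, hpx.le⟩)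
    obtain ⟨z, hz, hpz⟩ := intermediate_value_uIcc (hcont.continuousOn) ht
    have hzI := hIoosub hz
    have hs0 : 0 ≤ s := (hTsub s hsT).1
    have hnle : nxt s ≤ 1 := (hTsub _ (hnxt_mem s hsT hs1).1).2
    have hzS : z ∈ S := ⟨⟨le_of_lt (lt_of_le_of_lt hs0 hzI.1), lt_of_lt_of_le hzI.2 hnle⟩, hpz⟩
    have hzT := hST z hzS
    have := hnxt_le s z hzT hzI.1
    linarith [hzI.2]
  -- measure bound
  set L : ℝ := 1/10 / (d:ℝ) with hLdef
  have hUsub : {θ ∈ Set.Ico (0:ℝ) 1 | t < p θ} ⊆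
      (T : Set ℝ) ∪ ⋃ s ∈ T.filter (fun y => y < 1), (Set.Ioo s (nxt s) ∩ {θ : ℝ | t < p θ}) := by
    intro x hx
    by_cases hxT : x ∈ T
    · exact Or.inl hxT
    · right
      obtain ⟨s, hsT, hs1, hxs⟩ := hcover x ⟨hx.1.1, hx.1.2.le⟩ hxT
      exact Set.mem_biUnion (Finset.mem_coe.mpr (Finset.mem_filter.mpr ⟨hsT, hs1⟩)) ⟨hxs, hx.2⟩
  have hbound : ∀ s ∈ T.filter (fun y => y < 1),
      volume (Set.Ioo s (nxt s) ∩ {θ : ℝ | t < p θ}) ≤ ENNReal.ofReal L := by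
    intro s hs
    rw [Finset.mem_filter] at hs
    by_cases hne : (Set.Ioo s (nxt s) ∩ {θ : ℝ | t < p θ}).Nonempty
    · obtain ⟨x, hx1, hx2⟩ := hne
      have hsub := hsign s hs.1 hs.2 x hx1 hx2
      have hlen : nxt s - s < L := by
        by_contra hge
        push_neg at hge
        exact hno s (fun y hy => hsub ⟨hy.1, lt_of_lt_of_le hy.2 (by linarith [hy.2])⟩)
      calc volume (Set.Ioo s (nxt s) ∩ {θ : ℝ | t < p θ})
          ≤ volume (Set.Ioo s (nxt s)) := measure_mono Set.inter_subset_left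
        _ = ENNReal.ofReal (nxt s - s) := Real.volume_Ioo
        _ ≤ ENNReal.ofReal L := ENNReal.ofReal_le_ofReal hlen.le
    · rw [Set.not_nonempty_iff_eq_empty] at hne
      rw [hne]; simp
  have hle : volume {θ ∈ Set.Ico (0:ℝ) 1 | t < p θ} ≤
      ((T.filter (fun y => y < 1)).card : ENNReal) * ENNReal.ofReal L := by
    calc volume {θ ∈ Set.Ico (0:ℝ) 1 | t < p θ}
        ≤ volume ((T : Set ℝ) ∪ ⋃ s ∈ T.filter (fun y => y < 1),
            (Set.Ioo s (nxt s) ∩ {θ : ℝ | t < p θ})) := measure_mono hUsub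
      _ ≤ volume (T : Set ℝ) + volume (⋃ s ∈ T.filter (fun y => y < 1),
            (Set.Ioo s (nxt s) ∩ {θ : ℝ | t < p θ})) := measure_union_le _ _
      _ ≤ 0 + ∑ s ∈ T.filter (fun y => y < 1),
            volume (Set.Ioo s (nxt s) ∩ {θ : ℝ | t < p θ}) := by
          gcongr
          · exact le_of_eq (T.finite_toSet.measure_zero _)
          · exact measure_biUnion_finset_le _ _
      _ ≤ 0 + ∑ _s ∈ T.filter (fun y => y < 1), ENNReal.ofReal L := by
          gcongr with s hs
          · exact hbound s hs
      _ = ((T.filter (fun y => y < 1)).card : ENNReal) * ENNReal.ofReal L := by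
          rw [Finset.sum_const, nsmul_eq_mul, zero_add]
  have hcardle : (T.filter (fun y => y < 1)).card ≤ 2 * d + 2 :=
    le_trans (Finset.card_filter_le _ _) hTcard
  have hd1 : (1:ℝ) ≤ (d:ℝ) := by exact_mod_cast hdpos
  have hkey : ((2*d+2 : ℕ) : ℝ) * L ≤ 2/5 := by
    rw [hLdef, div_div, mul_one_div, div_le_div_iff₀ (by positivity) (by norm_num)]
    push_cast
    nlinarith
  have hfinal : volume {θ ∈ Set.Ico (0:ℝ) 1 | t < p θ} ≤ ENNReal.ofReal (2/5) := by
    calc volume {θ ∈ Set.Ico (0:ℝ) 1 | t < p θ}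
        ≤ ((T.filter (fun y => y < 1)).card : ENNReal) * ENNReal.ofReal L := hle
      _ ≤ ((2*d+2 : ℕ) : ENNReal) * ENNReal.ofReal L := by
          gcongr
      _ = ENNReal.ofReal (((2*d+2 : ℕ) : ℝ) * L) := by
          rw [ENNReal.ofReal_mul (by positivity), ENNReal.ofReal_natCast]
      _ ≤ ENNReal.ofReal (2/5) := ENNReal.ofReal_le_ofReal hkey
  have hcontr : (1/2 : ENNReal) ≤ ENNReal.ofReal (2/5) := le_trans hmeas hfinal
  have h12 : ENNReal.ofReal (1/2 : ℝ) = (1/2 : ENNReal) := by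
    rw [ENNReal.ofReal_div_of_pos (by norm_num)]
    norm_num
  rw [← h12, ENNReal.ofReal_le_ofReal_iff (by norm_num)] at hcontr
  norm_num at hcontr
end

section
/- Let f : ℝ/ℤ → ℝ be continuous, ω irrational, and p_n/q_n → ω rationals. Suppose for each n, S(p_n/q_n) = ∪_θ σ(h_{p_n/q_n,θ}) is a union of at most q_n closed intervals, and suppose there are constants C > 0, β > 1/2 such that every E ∈ Σ ⊆ S(ω) lies within distance C|ω − p_n/q_n|^β of S(p_n/q_n) for all large n, where additionally |ω − p_n/q_n| < 1/q_n². Then the Lebesgue measure of Σ \ S(p_n/q_n) tends to 0 as n → ∞. -/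
/-!
Every point of `Σ` outside `S(p/q) = ⋃ᵢ [aᵢ, bᵢ]` lies in one of the two collars of width
`ε = C|ω - p/q|^β` around some `[aᵢ, bᵢ]`, so `|Σ \ S(p/q)| ≤ 2qε`. Since `|ω - p/q| < 1/q²`,
`q|ω - p/q|^β ≤ |ω - p/q|^(β - 1/2)`, which tends to `0` because `β > 1/2` and `p/q → ω`.
-/

open MeasureTheory Filter

/-- `h` is the Schrödinger operator on `ℓ²(ℤ)` with potential `n ↦ f(θ + nω)`. -/
def IsSchrodingerOp (f : ℝ → ℝ) (ω θ : ℝ)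
    (h : lp (fun _ : ℤ => ℝ) 2 →L[ℝ] lp (fun _ : ℤ => ℝ) 2) : Prop :=
  ∀ (ψ : lp (fun _ : ℤ => ℝ) 2) (n : ℤ),
    h ψ n = ψ (n + 1) + ψ (n - 1) + f (θ + n * ω) * ψ n

/-- `S(ω) = ⋃_θ σ(h_{ω,θ})`. -/
def unionSpectrum (f : ℝ → ℝ) (ω : ℝ) : Set ℝ :=
  {E | ∃ (θ : ℝ) (h : lp (fun _ : ℤ => ℝ) 2 →L[ℝ] lp (fun _ : ℤ => ℝ) 2),
    IsSchrodingerOp f ω θ h ∧ E ∈ spectrum ℝ h}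

open Set

theorem volume_Icc_sub_add_diff_Icc_le (a b ε : ℝ) :
    volume (Icc (a - ε) (b + ε) \ Icc a b) ≤ 2 * ENNReal.ofReal ε := by
  have hcover : Icc (a - ε) (b + ε) \ Icc a b ⊆ Ico (a - ε) a ∪ Ioc b (b + ε) := by
    rintro x ⟨⟨hx₁, hx₂⟩, hx⟩
    rw [mem_Icc, not_and_or, not_le, not_le] at hx
    rcases hx with hx | hx
    · exact Or.inl ⟨hx₁, hx⟩
    · exact Or.inr ⟨hx, hx₂⟩
  calc volume (Icc (a - ε) (b + ε) \ Icc a b)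
      ≤ volume (Ico (a - ε) a) + volume (Ioc b (b + ε)) :=
        (measure_mono hcover).trans (measure_union_le _ _)
    _ = 2 * ENNReal.ofReal ε := by
      rw [Real.volume_Ico, Real.volume_Ioc, sub_sub_cancel, add_sub_cancel_left, two_mul]

theorem volume_diff_iUnion_Icc_le {ι : Type*} [Fintype ι] (a b : ι → ℝ) (ε : ℝ) (s : Set ℝ)
    (hs : ∀ x ∈ s, ∃ y ∈ ⋃ i, Icc (a i) (b i), |x - y| ≤ ε) :
    volume (s \ ⋃ i, Icc (a i) (b i)) ≤ Fintype.card ι * (2 * ENNReal.ofReal ε) := by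
  have hcover :
      s \ ⋃ i, Icc (a i) (b i) ⊆ ⋃ i, Icc (a i - ε) (b i + ε) \ Icc (a i) (b i) := by
    rintro x ⟨hx, hxI⟩
    obtain ⟨y, hy, hxy⟩ := hs x hx
    obtain ⟨i, hyi⟩ := mem_iUnion.1 hy
    rw [abs_le] at hxy
    exact mem_iUnion.2 ⟨i, ⟨by constructor <;> linarith [hyi.1, hyi.2],
      fun h => hxI (mem_iUnion.2 ⟨i, h⟩)⟩⟩
  calc volume (s \ ⋃ i, Icc (a i) (b i))
      ≤ ∑ i, volume (Icc (a i - ε) (b i + ε) \ Icc (a i) (b i)) :=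
        (measure_mono hcover).trans (measure_iUnion_fintype_le _ _)
    _ ≤ ∑ _i : ι, 2 * ENNReal.ofReal ε :=
        Finset.sum_le_sum fun i _ => volume_Icc_sub_add_diff_Icc_le _ _ _
    _ = Fintype.card ι * (2 * ENNReal.ofReal ε) := by
      rw [Finset.sum_const, nsmul_eq_mul, Finset.card_univ]

theorem natCast_mul_rpow_le_rpow_sub_half {q : ℕ} {d β : ℝ} (hd : 0 ≤ d)
    (hdq : d ≤ 1 / (q : ℝ) ^ 2) (hβ : β ≠ 0) : q * d ^ β ≤ d ^ (β - 1 / 2) := by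
  have hsqrt : (q : ℝ) * √d ≤ 1 := by
    have hsq : ((q : ℝ) * √d) ^ 2 ≤ 1 := by
      rw [mul_pow, Real.sq_sqrt hd]
      calc (q : ℝ) ^ 2 * d ≤ q ^ 2 * (1 / q ^ 2) := by gcongr
        _ ≤ 1 := by
          rcases eq_or_ne (q : ℝ) 0 with h | h
          · simp [h]
          · rw [mul_one_div_cancel (pow_ne_zero 2 h)]
    exact (pow_le_one_iff_of_nonneg (by positivity) two_ne_zero).1 hsq
  calc (q : ℝ) * d ^ β = q * √d * d ^ (β - 1 / 2) := by
        rw [Real.sqrt_eq_rpow, mul_assoc, ← Real.rpow_add' hd (by simpa using hβ)]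
        ring_nf
    _ ≤ d ^ (β - 1 / 2) :=
        mul_le_of_le_one_left (Real.rpow_nonneg hd _) hsqrt

theorem measure_spectrum_difference_tendsto_zero_general
    (f : ℝ → ℝ)
    (ω : ℝ)
    (p : ℕ → ℤ) (q : ℕ → ℕ)
    (hconv : Tendsto (fun n => (p n : ℝ) / (q n : ℝ)) atTop (nhds ω))
    (hclose : ∀ n, |ω - (p n : ℝ) / (q n : ℝ)| < 1 / (q n : ℝ) ^ 2)
    (Sig : Set ℝ)
    (hintervals : ∀ n, ∃ a b : Fin (q n) → ℝ,
      unionSpectrum f ((p n : ℝ) / (q n : ℝ)) = ⋃ i, Set.Icc (a i) (b i))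
    (C β : ℝ) (hC : 0 < C) (hβ : 1 / 2 < β)
    (happrox : ∀ᶠ n in atTop, ∀ E ∈ Sig,
      ∃ E' ∈ unionSpectrum f ((p n : ℝ) / (q n : ℝ)),
        |E - E'| ≤ C * |ω - (p n : ℝ) / (q n : ℝ)| ^ β) :
    Tendsto (fun n => volume (Sig \ unionSpectrum f ((p n : ℝ) / (q n : ℝ))))
      atTop (nhds 0) := by
  set d : ℕ → ℝ := fun n => |ω - (p n : ℝ) / (q n : ℝ)|
  have hd : Tendsto d atTop (nhds 0) := by
    simpa [d] using ((tendsto_const_nhds (x := ω)).sub hconv).abs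
  have hbound : ∀ᶠ n in atTop, volume (Sig \ unionSpectrum f ((p n : ℝ) / (q n : ℝ)))
      ≤ ENNReal.ofReal (2 * C * d n ^ (β - 1 / 2)) := by
    filter_upwards [happrox] with n hn
    obtain ⟨a, b, hab⟩ := hintervals n
    rw [hab] at hn ⊢
    calc volume (Sig \ ⋃ i, Icc (a i) (b i))
        ≤ q n * (2 * ENNReal.ofReal (C * d n ^ β)) := by
          simpa using volume_diff_iUnion_Icc_le a b _ Sig hn
      _ = ENNReal.ofReal (2 * C * (q n * d n ^ β)) := by
          rw [← ENNReal.ofReal_natCast, ← ENNReal.ofReal_ofNat 2,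
            ← ENNReal.ofReal_mul zero_le_two, ← ENNReal.ofReal_mul (Nat.cast_nonneg _)]
          ring_nf
      _ ≤ ENNReal.ofReal (2 * C * d n ^ (β - 1 / 2)) := by
          gcongr
          exact natCast_mul_rpow_le_rpow_sub_half (abs_nonneg _) (hclose n).le (by linarith)
  have hlim : Tendsto (fun n => ENNReal.ofReal (2 * C * d n ^ (β - 1 / 2))) atTop (nhds 0) := by
    have hrpow :=
      (Real.continuousAt_rpow_const 0 (β - 1 / 2) (Or.inr (by linarith))).tendsto.comp hd
    rw [Real.zero_rpow (by linarith)] at hrpow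
    simpa using ENNReal.tendsto_ofReal (hrpow.const_mul (2 * C))
  exact tendsto_of_tendsto_of_tendsto_of_le_of_le' tendsto_const_nhds hlim
    (Eventually.of_forall fun _ => zero_le) hbound

/-- If each `S(p_n/q_n)` is a union of at most `q_n` closed intervals, every `E` in a
measurable set `Σ ⊆ S(ω)` lies within `C|ω − p_n/q_n|^β` of `S(p_n/q_n)` for all large `n`
with `β > 1/2`, and `|ω − p_n/q_n| < 1/q_n²`, then `|Σ \ S(p_n/q_n)| → 0`. -/
theorem measure_spectrum_difference_tendsto_zero
    (f : ℝ → ℝ) (hf : Continuous f) (hper : Function.Periodic f 1)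
    (ω : ℝ) (hω : Irrational ω)
    (p : ℕ → ℤ) (q : ℕ → ℕ) (hq : ∀ n, 0 < q n)
    (hconv : Tendsto (fun n => (p n : ℝ) / (q n : ℝ)) atTop (nhds ω))
    (hclose : ∀ n, |ω - (p n : ℝ) / (q n : ℝ)| < 1 / (q n : ℝ) ^ 2)
    (Sig : Set ℝ) (hmeas : MeasurableSet Sig) (hsub : Sig ⊆ unionSpectrum f ω)
    (hintervals : ∀ n, ∃ a b : Fin (q n) → ℝ,
      unionSpectrum f ((p n : ℝ) / (q n : ℝ)) = ⋃ i, Set.Icc (a i) (b i))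
    (C β : ℝ) (hC : 0 < C) (hβ : 1 / 2 < β)
    (happrox : ∀ᶠ n in atTop, ∀ E ∈ Sig,
      ∃ E' ∈ unionSpectrum f ((p n : ℝ) / (q n : ℝ)),
        |E - E'| ≤ C * |ω - (p n : ℝ) / (q n : ℝ)| ^ β) :
    Tendsto (fun n => volume (Sig \ unionSpectrum f ((p n : ℝ) / (q n : ℝ))))
      atTop (nhds 0) :=
  measure_spectrum_difference_tendsto_zero_general f ω p q hconv hclose Sig hintervals C β hC hβ
    happrox
end
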